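/- Suppose dim V = 2. If φ : 𝒢 → 𝒢' is a bijection such that for all X, Y ∈ 𝒢, X and Y are complementary if and only if φ(X) and φ(Y) are complementary, then dim V' = 2 and the cardinalities of K and K' are equal. Conversely, if dim V = dim V' = 2, then every bijection φ : 𝒢 → 𝒢' has this property, since any two distinct elements of 𝒢 (resp. 𝒢') are complementary. -/

import Mathlib

/-! In dimension 2 the members of 𝒢 are the lines, two of them are complementary iff they are
distinct, and 𝒢 ≃ Option K: the lines other than a fixed line `Y` are the complements of `Y`,
which correspond to the linear maps `X → Y` for one complement `X`, and `Hom(X, Y) ≃ K`.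
A bijection `φ` preserving complementarity therefore makes complementarity on 𝒢' the relation
`≠`. A member `X` of 𝒢' is not complementary to itself, so `X ≠ 0` (else `V' = 0` and
`X = ⊥ = ⊤`); and if `dim X > 1`, the graph of a nonzero, non-injective map from `X` to a
complement `Y ≅ X` is a member of 𝒢' different from `X` but meeting it. So `dim X = 1`, `dim V' = 2`, and
`Option K ≃ 𝒢 ≃ 𝒢' ≃ Option K'` gives `K ≃ K'`. -/

open Submodule

/-- `X` belongs to the Grassmannian 𝒢: `X` is isomorphic (as a `K`-vector space)
to the quotient `V ⧸ X`, equivalently to one (hence every) complement of `X`. -/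
def InG (K V : Type*) [DivisionRing K] [AddCommGroup V] [Module K V]
    (X : Submodule K V) : Prop :=
  Nonempty (X ≃ₗ[K] (V ⧸ X))

/-- `quotRank K V A B` is the dimension of the quotient space `B / (A ∩ B)`,
where `A ∩ B` is viewed as a subspace of `B`.  For `A ≤ B` this is `dim (B/A)`. -/
noncomputable def quotRank (K V : Type*) [DivisionRing K] [AddCommGroup V] [Module K V]
    (A B : Submodule K V) : Cardinal :=
  Module.rank K (↥B ⧸ (A.comap B.subtype))

/-- `X` and `Y` are adjacent: `dim ((X+Y)/X) = dim ((X+Y)/Y) = 1`. -/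
def Adjacent (K V : Type*) [DivisionRing K] [AddCommGroup V] [Module K V]
    (X Y : Submodule K V) : Prop :=
  quotRank K V X (X ⊔ Y) = 1 ∧ quotRank K V Y (X ⊔ Y) = 1

universe u u' v v'

namespace Submodule

variable {R E : Type*} [Ring R] [AddCommGroup E] [Module R E] {p q : Submodule R E}

/-- The complement of `q` attached to `g : p →ₗ q` is the kernel of the retraction
`x + y ↦ g x + y`, i.e. the graph `{x - g x | x ∈ p}` of `-g`. -/
noncomputable def isComplEquivLinearMap (h : IsCompl p q) : {r // IsCompl q r} ≃ (p →ₗ[R] q) :=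
  q.isComplEquivProj.trans
    { toFun f := f.1 ∘ₗ p.subtype
      invFun g := ⟨LinearMap.ofIsCompl h g LinearMap.id, LinearMap.ofIsCompl_apply_right h⟩
      left_inv f := Subtype.ext <| LinearMap.ofIsCompl_eq h (fun _ => rfl) fun y => (f.2 y).symm
      right_inv g := by ext; simp }

theorem mem_isComplEquivLinearMap_symm_iff (h : IsCompl p q) (g : p →ₗ[R] q) (x : p) :
    (x : E) ∈ ((isComplEquivLinearMap h).symm g).1 ↔ g x = 0 := by
  simp [isComplEquivLinearMap]

end Submodule

open LinearMap

section DivisionRing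

variable {K V : Type*} [DivisionRing K] [AddCommGroup V] [Module K V]

theorem Module.End.exists_ne_zero_ker_ne_bot_of_one_lt_rank (h : 1 < Module.rank K V) :
    ∃ f : Module.End K V, f ≠ 0 ∧ ker f ≠ ⊥ := by
  obtain ⟨x, hx⟩ := rank_pos_iff_exists_ne_zero.1 (zero_lt_one.trans h)
  obtain ⟨C, hC⟩ := (K ∙ x).exists_isCompl
  refine ⟨(K ∙ x).projection C hC, fun h0 => hx ?_, ?_⟩
  · simpa [h0] using (projection_apply_of_mem_left hC (mem_span_singleton_self x)).symm
  · rw [ker_projection]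
    rintro rfl
    have := rank_span_le (R := K) ({x} : Set V)
    rw [Cardinal.mk_singleton, codisjoint_bot.1 hC.codisjoint, rank_top] at this
    exact this.not_gt h

theorem InG.of_isCompl {Y Z : Submodule K V} (hY : InG K V Y) (h : IsCompl Y Z) : InG K V Z :=
  ⟨(quotientEquivOfIsCompl Y Z h).symm ≪≫ₗ hY.some.symm ≪≫ₗ
    (quotientEquivOfIsCompl Z Y h.symm).symm⟩

theorem InG.rank_add_rank {X : Submodule K V} (hX : InG K V X) :
    Module.rank K X + Module.rank K X = Module.rank K V := by
  rw [← X.rank_quotient_add_rank, ← hX.some.rank_eq]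

theorem InG.exists_inG_ne_not_isCompl_of_one_lt_rank {X : Submodule K V} (hX : InG K V X)
    (h : 1 < Module.rank K X) : ∃ Z, InG K V Z ∧ Z ≠ X ∧ ¬IsCompl X Z := by
  obtain ⟨Y, hXY⟩ := X.exists_isCompl
  obtain ⟨f, hf0, hfker⟩ := Module.End.exists_ne_zero_ker_ne_bot_of_one_lt_rank h
  let g : X →ₗ[K] Y := (hX.some ≪≫ₗ quotientEquivOfIsCompl X Y hXY).toLinearMap ∘ₗ f
  let Z := (isComplEquivLinearMap hXY).symm g
  have hmem (x : X) : (x : V) ∈ Z.1 ↔ f x = 0 := by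
    simp [Z, mem_isComplEquivLinearMap_symm_iff, g]
  refine ⟨Z, (hX.of_isCompl hXY).of_isCompl Z.2, fun hZX => hf0 ?_, fun hXZ => ?_⟩
  · ext x
    simpa using (hmem x).1 (by rw [hZX]; exact x.2)
  · obtain ⟨x, hx, hx0⟩ := (ker f).ne_bot_iff.1 hfker
    exact hx0 (Subtype.ext (disjoint_def.1 hXZ.disjoint _ x.2 ((hmem x).2 hx)))

theorem rank_eq_two_of_forall_isCompl_iff_ne (X : {X : Submodule K V // InG K V X})
    (hcompl : ∀ A B : {X : Submodule K V // InG K V X}, IsCompl A.1 B.1 ↔ A ≠ B) :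
    Module.rank K V = 2 := by
  have hle : Module.rank K X.1 ≤ 1 := by
    by_contra! h
    obtain ⟨Z, hZ, hZX, hXZ⟩ := X.2.exists_inG_ne_not_isCompl_of_one_lt_rank h
    exact hXZ ((hcompl X ⟨Z, hZ⟩).2 fun h => hZX (congrArg Subtype.val h).symm)
  have hne : Module.rank K X.1 ≠ 0 := by
    intro h0
    have : Subsingleton V := rank_zero_iff.1 (by rw [← X.2.rank_add_rank, h0, add_zero])
    refine (hcompl X X).1 ?_ rfl
    exact ⟨disjoint_iff.2 (Subsingleton.elim _ _), codisjoint_iff.2 (Subsingleton.elim _ _)⟩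
  rw [← X.2.rank_add_rank, le_antisymm hle (Cardinal.one_le_iff_ne_zero.2 hne)]
  norm_num

theorem inG_iff_finrank_eq_one (h2 : Module.finrank K V = 2) {X : Submodule K V} :
    InG K V X ↔ Module.finrank K X = 1 := by
  have := Module.finite_of_finrank_eq_succ h2
  have := X.finrank_quotient_add_finrank
  rw [InG, FiniteDimensional.nonempty_linearEquiv_iff_finrank_eq]
  omega

theorem isCompl_iff_ne_of_finrank_eq_two (h2 : Module.finrank K V = 2)
    (X Y : {X : Submodule K V // InG K V X}) : IsCompl X.1 Y.1 ↔ X ≠ Y := by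
  have := Module.finite_of_finrank_eq_succ h2
  have hX := (inG_iff_finrank_eq_one h2).1 X.2
  have hY := (inG_iff_finrank_eq_one h2).1 Y.2
  rw [isCompl_iff_disjoint _ _ (by omega), ← Subtype.coe_ne_coe]
  have hXatom := isAtom_iff_finrank_eq_one.2 hX
  refine ⟨fun hd hXY => hXatom.ne_bot ?_, hXatom.disjoint_of_ne (isAtom_iff_finrank_eq_one.2 hY)⟩
  rw [hXY] at hd ⊢
  exact disjoint_self.1 hd

theorem nonempty_linearMap_equiv_of_finrank_eq_one {M N : Type*} [AddCommGroup M] [Module K M]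
    [AddCommGroup N] [Module K N] (hM : Module.finrank K M = 1) (hN : Module.finrank K N = 1) :
    Nonempty ((M →ₗ[K] N) ≃ K) := by
  obtain ⟨eM⟩ := Module.nonempty_linearEquiv_of_finrank_eq_one hM
  obtain ⟨eN⟩ := Module.nonempty_linearEquiv_of_finrank_eq_one hN
  exact ⟨(eM.symm.arrowCongrAddEquiv (LinearEquiv.refl K N)).toEquiv.trans
    ((ringLmapEquivSelf K ℕ N).toEquiv.trans eN.symm.toEquiv)⟩

theorem nonempty_inG_equiv_option (h2 : Module.finrank K V = 2) :
    Nonempty ({X : Submodule K V // InG K V X} ≃ Option K) := by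
  have := Module.finite_of_finrank_eq_succ h2
  have : Nontrivial V := Module.nontrivial_of_finrank_eq_succ h2
  obtain ⟨v, hv⟩ := exists_ne (0 : V)
  have hY : Module.finrank K (K ∙ v) = 1 := finrank_span_singleton hv
  obtain ⟨X, hYX⟩ := (K ∙ v).exists_isCompl
  have hX : Module.finrank K X = 1 := by
    have := finrank_add_eq_of_isCompl hYX
    omega
  let Y : {X : Submodule K V // InG K V X} := ⟨K ∙ v, (inG_iff_finrank_eq_one h2).2 hY⟩
  have hcompl := isCompl_iff_ne_of_finrank_eq_two h2 Y
  let e : {A // A ≠ Y} ≃ {Z // IsCompl Y.1 Z} :=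
    { toFun A := ⟨A.1.1, (hcompl A.1).2 A.2.symm⟩
      invFun Z := ⟨⟨Z.1, Y.2.of_isCompl Z.2⟩, fun h => (hcompl _).1 Z.2 h.symm⟩
      left_inv _ := rfl
      right_inv _ := rfl }
  obtain ⟨eK⟩ := nonempty_linearMap_equiv_of_finrank_eq_one hX hY
  exact ⟨(Equiv.optionSubtypeNe Y).symm.trans
    (Equiv.optionCongr (e.trans ((isComplEquivLinearMap hYX.symm).trans eK)))⟩

end DivisionRing

theorem stmt_12_general (K : Type u) (V : Type v) [DivisionRing K] [AddCommGroup V] [Module K V]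
    (K' : Type u') (V' : Type v') [DivisionRing K'] [AddCommGroup V'] [Module K' V'] :
    ((Module.rank K V = 2) →
      ∀ φ : {X : Submodule K V // InG K V X} → {X : Submodule K' V' // InG K' V' X},
        Function.Bijective φ →
        (∀ X Y : {X : Submodule K V // InG K V X},
          IsCompl X.1 Y.1 ↔ IsCompl (φ X).1 (φ Y).1) →
        Module.rank K' V' = 2 ∧
          Cardinal.lift.{u'} (Cardinal.mk K) = Cardinal.lift.{u} (Cardinal.mk K')) ∧
    ((Module.rank K V = 2 ∧ Module.rank K' V' = 2) →
      ((∀ X Y : {X : Submodule K V // InG K V X}, X ≠ Y → IsCompl X.1 Y.1) ∧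
       (∀ X Y : {X : Submodule K' V' // InG K' V' X}, X ≠ Y → IsCompl X.1 Y.1) ∧
       ∀ φ : {X : Submodule K V // InG K V X} → {X : Submodule K' V' // InG K' V' X},
         Function.Bijective φ →
         ∀ X Y : {X : Submodule K V // InG K V X},
           IsCompl X.1 Y.1 ↔ IsCompl (φ X).1 (φ Y).1)) := by
  refine ⟨fun h2 φ hφ hcompl => ?_, fun ⟨h2, h2'⟩ => ?_⟩
  · replace h2 : Module.finrank K V = 2 := Module.finrank_eq_of_rank_eq (by exact_mod_cast h2)
    have hcompl' : ∀ A B : {X : Submodule K' V' // InG K' V' X}, IsCompl A.1 B.1 ↔ A ≠ B := by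
      refine hφ.2.forall₂.2 fun X Y => ?_
      rw [← hcompl, isCompl_iff_ne_of_finrank_eq_two h2, hφ.1.ne_iff]
    obtain ⟨e⟩ := nonempty_inG_equiv_option h2
    have h2' := rank_eq_two_of_forall_isCompl_iff_ne (φ (e.symm none)) hcompl'
    obtain ⟨e'⟩ := nonempty_inG_equiv_option (Module.finrank_eq_of_rank_eq (by exact_mod_cast h2'))
    exact ⟨h2', Cardinal.lift_mk_eq'.2
      ⟨Equiv.removeNone (e.symm.trans ((Equiv.ofBijective φ hφ).trans e'))⟩⟩
  · replace h2 : Module.finrank K V = 2 := Module.finrank_eq_of_rank_eq (by exact_mod_cast h2)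
    replace h2' : Module.finrank K' V' = 2 :=
      Module.finrank_eq_of_rank_eq (by exact_mod_cast h2')
    refine ⟨fun X Y => (isCompl_iff_ne_of_finrank_eq_two h2 X Y).2,
      fun X Y => (isCompl_iff_ne_of_finrank_eq_two h2' X Y).2, fun φ hφ X Y => ?_⟩
    rw [isCompl_iff_ne_of_finrank_eq_two h2, isCompl_iff_ne_of_finrank_eq_two h2', hφ.1.ne_iff]

/-- For `dim V = 2`: every isomorphism of distant graphs `φ : 𝒢 → 𝒢'` forces
`dim V' = 2` and `#K = #K'`. Conversely, if `dim V = dim V' = 2` then every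
bijection `φ : 𝒢 → 𝒢'` is an isomorphism of distant graphs, since any two
distinct elements of 𝒢 (resp. 𝒢') are complementary. -/
theorem stmt_12 (K : Type u) (V : Type v) [DivisionRing K] [AddCommGroup V] [Module K V]
    (K' : Type u') (V' : Type v') [DivisionRing K'] [AddCommGroup V'] [Module K' V']
    (hG : Nonempty {X : Submodule K V // InG K V X})
    (hG' : Nonempty {X : Submodule K' V' // InG K' V' X}) :
    ((Module.rank K V = 2) →
      ∀ φ : {X : Submodule K V // InG K V X} → {X : Submodule K' V' // InG K' V' X},
        Function.Bijective φ →
        (∀ X Y : {X : Submodule K V // InG K V X},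
          IsCompl X.1 Y.1 ↔ IsCompl (φ X).1 (φ Y).1) →
        Module.rank K' V' = 2 ∧
          Cardinal.lift.{u'} (Cardinal.mk K) = Cardinal.lift.{u} (Cardinal.mk K')) ∧
    ((Module.rank K V = 2 ∧ Module.rank K' V' = 2) →
      ((∀ X Y : {X : Submodule K V // InG K V X}, X ≠ Y → IsCompl X.1 Y.1) ∧
       (∀ X Y : {X : Submodule K' V' // InG K' V' X}, X ≠ Y → IsCompl X.1 Y.1) ∧
       ∀ φ : {X : Submodule K V // InG K V X} → {X : Submodule K' V' // InG K' V' X},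
         Function.Bijective φ →
         ∀ X Y : {X : Submodule K V // InG K V X},
           IsCompl X.1 Y.1 ↔ IsCompl (φ X).1 (φ Y).1)) :=
  stmt_12_general K V K' V'
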